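/- The α-half-sine pulse h_α(t) = cos(g_α(t)) for |t| < T and 0 otherwise (with g_α as defined and β = (π/2)(4/π)^{1/α}, α > 0) satisfies the constant-envelope condition h_α(t)² + h_α(t−T)² = 1 for all 0 < t < T. -/

import Mathlib

/-!
The phase `g` is built so that `g t + g (t - T) = π / 2` on `0 < t < T`: away from `t = T / 2`
one of the two arguments lies in the rising branch and the other in the falling branch, which is
`π / 2` minus the rising branch at the mirrored point. At `t = T / 2` both values equal `π / 4`,
and this is exactly what the choice of `β` enforces. Complementary phases then give
`cos² a + cos² (π / 2 - a) = cos² a + sin² a = 1`.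
-/

open Real

theorem cos_sq_add_cos_sq_of_add_eq_pi_div_two {a b : ℝ} (h : a + b = π / 2) :
    cos a ^ 2 + cos b ^ 2 = 1 := by
  rw [show b = π / 2 - a by linarith, cos_pi_div_two_sub, cos_sq_add_sin_sq]

theorem pi_div_two_mul_rpow_four_div_pi_rpow_eq {α : ℝ} (hα : α ≠ 0) :
    (π / (2 * ((π / 2) * (4 / π) ^ (1 / α)))) ^ α = π / 4 := by
  have hc : (4 / π) ^ (1 / α) ≠ 0 := by positivity
  calc (π / (2 * ((π / 2) * (4 / π) ^ (1 / α)))) ^ α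
      = (((4 / π) ^ (1 / α))⁻¹) ^ α := by field_simp
    _ = ((π / 4) ^ α⁻¹) ^ α := by rw [← inv_rpow (by positivity), inv_div, one_div]
    _ = π / 4 := rpow_inv_rpow (by positivity) hα

theorem phase_add_phase_sub_eq_pi_div_two {α T β : ℝ} (hα : α ≠ 0)
    (hβ : β = (π / 2) * (4 / π) ^ (1 / α)) {g : ℝ → ℝ}
    (hg1 : ∀ t : ℝ, |t| ≤ T / 2 → g t = (π * |t| / (β * T)) ^ α)
    (hg2 : ∀ t : ℝ, T / 2 < |t| → |t| < T → g t = π / 2 - (π * (T - |t|) / (β * T)) ^ α)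
    {t : ℝ} (ht0 : 0 < t) (htT : t < T) :
    g t + g (t - T) = π / 2 := by
  have habs : |t| = t := abs_of_pos ht0
  have habs' : |t - T| = T - t := by rw [abs_of_neg (by linarith), neg_sub]
  rcases lt_trichotomy t (T / 2) with hlt | heq | hgt
  · rw [hg1 t (by rw [habs]; linarith), hg2 (t - T) (by rw [habs']; linarith)
      (by rw [habs']; linarith), habs, habs', sub_sub_cancel]
    ring
  · have hmid : (π * (T / 2) / (β * T)) ^ α = π / 4 := by
      rw [← pi_div_two_mul_rpow_four_div_pi_rpow_eq hα, ← hβ]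
      congr 1
      field_simp [show T ≠ 0 by linarith]
    rw [hg1 t (by rw [habs]; linarith), hg1 (t - T) (by rw [habs']; linarith), habs, habs',
      heq, show T - T / 2 = T / 2 by ring, hmid]
    ring
  · rw [hg2 t (by rw [habs]; linarith) (by rw [habs]; linarith), hg1 (t - T)
      (by rw [habs']; linarith), habs, habs']
    ring

theorem alpha_half_sine_CE_general (α T β : ℝ) (hα : 0 < α)
    (hβ : β = (π / 2) * (4 / π) ^ (1 / α)) (g h : ℝ → ℝ)
    (hg1 : ∀ t : ℝ, |t| ≤ T / 2 → g t = (π * |t| / (β * T)) ^ α)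
    (hg2 : ∀ t : ℝ, T / 2 < |t| → |t| < T → g t = π / 2 - (π * (T - |t|) / (β * T)) ^ α)
    (hh : ∀ t : ℝ, h t = if |t| < T then Real.cos (g t) else 0) :
    ∀ t : ℝ, 0 < t → t < T → h t ^ 2 + h (t - T) ^ 2 = 1 := by
  intro t ht0 htT
  have hht : h t = cos (g t) := by
    rw [hh, if_pos (by rwa [abs_of_pos ht0])]
  have hht' : h (t - T) = cos (g (t - T)) := by
    rw [hh, if_pos (by rw [abs_of_neg (by linarith)]; linarith)]
  rw [hht, hht']
  exact cos_sq_add_cos_sq_of_add_eq_pi_div_two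
    (phase_add_phase_sub_eq_pi_div_two hα.ne' hβ hg1 hg2 ht0 htT)

theorem alpha_half_sine_CE (α T β : ℝ) (hα : 0 < α) (hT : 0 < T)
    (hβ : β = (π / 2) * (4 / π) ^ (1 / α)) (g h : ℝ → ℝ)
    (hg1 : ∀ t : ℝ, |t| ≤ T / 2 → g t = (π * |t| / (β * T)) ^ α)
    (hg2 : ∀ t : ℝ, T / 2 < |t| → |t| < T → g t = π / 2 - (π * (T - |t|) / (β * T)) ^ α)
    (hh : ∀ t : ℝ, h t = if |t| < T then Real.cos (g t) else 0) :
    ∀ t : ℝ, 0 < t → t < T → h t ^ 2 + h (t - T) ^ 2 = 1 :=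
  alpha_half_sine_CE_general α T β hα hβ g h hg1 hg2 hh
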